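/- Let D be a coherent set of gambles on Ω, let W(D) := {f ∈ G(Ω) : f + f' ∈ D for all f' ∈ D}, and define P_D(f) := sup{μ ∈ ℝ : f − μ ∈ D} for every gamble f. Then: P_D(f) is a (finite) real number satisfying inf f ≤ P_D(f) ≤ sup f for every gamble f; P_D(f) = P_{W(D)}(f) for every gamble f; and P_D(f) ≥ 0 for all f ∈ W(D). Moreover, a real-valued functional P on G(Ω) equals P_D for some coherent set D (i.e., P is a coherent lower prevision) if and only if for all gambles f, f₁, f₂ and all real λ ≥ 0: (P1) P(f) ≥ inf f; (P2) P(f₁ + f₂) ≥ P(f₁) + P(f₂); (P3) P(λf) = λP(f). -/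

import Mathlib

variable {Ω : Type*}

/-- A bounded real-valued function on `Ω` (a gamble). -/
def Bdd (f : Ω → ℝ) : Prop := ∃ M : ℝ, ∀ ω, |f ω| ≤ M

/-- A coherent set of desirable gambles on `Ω`:  its elements are gambles (bounded);
`0 ∉ D`; every gamble `f > 0` (pointwise `≥ 0` and nonzero) belongs to `D`; and `D` is
closed under positive scaling and addition. -/
def Coherent (D : Set (Ω → ℝ)) : Prop :=
  (∀ f ∈ D, Bdd f) ∧ (0 : Ω → ℝ) ∉ D ∧
  (∀ f : Ω → ℝ, Bdd f → 0 ≤ f → f ≠ 0 → f ∈ D) ∧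
  (∀ f ∈ D, ∀ c : ℝ, 0 < c → c • f ∈ D) ∧ ∀ f ∈ D, ∀ g ∈ D, f + g ∈ D

/-- The set of weakly desirable gambles associated with `D`. -/
def weakly (D : Set (Ω → ℝ)) : Set (Ω → ℝ) := {f | Bdd f ∧ ∀ g ∈ D, f + g ∈ D}

/-- The lower prevision associated with a set `A` of gambles:
`P_A(f) = sup {μ : f - μ ∈ A}`. -/
noncomputable def lpr (A : Set (Ω → ℝ)) (f : Ω → ℝ) : ℝ :=
  sSup {μ : ℝ | (f - fun _ => μ) ∈ A}

/-!
For a coherent `D`, the set `S(f) = {μ | f - μ ∈ D}` of buying prices of `f` contains every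
`μ < inf f` (then `f - μ > 0`) and no `μ > sup f` (then `-(f - μ) > 0` is also desirable, and
adding the two gives `0 ∈ D`), so `P_D(f)` is finite and between `inf f` and `sup f`. Adding a
positive constant to a weakly desirable gamble makes it desirable, which gives `P_D = P_{W(D)}`.
The sets of prices satisfy `S(f) + S(g) ⊆ S(f + g)` and `S(c • f) = c • S(f)`, whence (P2) and (P3).
Conversely, a functional `P` with (P1)–(P3) is recovered as `P_D` for
`D = {f | f > 0 ∨ P f > 0}`, because `P (f - μ) = P f - μ`.
-/

theorem bdd_const (c : ℝ) : Bdd (fun _ : Ω => c) := ⟨|c|, fun _ => le_rfl⟩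

namespace Bdd

variable {f g : Ω → ℝ}

theorem add (hf : Bdd f) (hg : Bdd g) : Bdd (f + g) := by
  obtain ⟨M, hM⟩ := hf
  obtain ⟨N, hN⟩ := hg
  exact ⟨M + N, fun ω => (abs_add_le _ _).trans (add_le_add (hM ω) (hN ω))⟩

theorem neg (hf : Bdd f) : Bdd (-f) := by
  obtain ⟨M, hM⟩ := hf
  exact ⟨M, fun ω => by simpa using hM ω⟩

theorem sub (hf : Bdd f) (hg : Bdd g) : Bdd (f - g) :=
  sub_eq_add_neg f g ▸ hf.add hg.neg

theorem smul (hf : Bdd f) (c : ℝ) : Bdd (c • f) := by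
  obtain ⟨M, hM⟩ := hf
  refine ⟨|c| * M, fun ω => ?_⟩
  rw [Pi.smul_apply, smul_eq_mul, abs_mul]
  exact mul_le_mul_of_nonneg_left (hM ω) (abs_nonneg c)

theorem bddAbove_range (hf : Bdd f) : BddAbove (Set.range f) := by
  obtain ⟨M, hM⟩ := hf
  exact ⟨M, by rintro _ ⟨ω, rfl⟩; exact (abs_le.1 (hM ω)).2⟩

theorem bddBelow_range (hf : Bdd f) : BddBelow (Set.range f) := by
  obtain ⟨M, hM⟩ := hf
  exact ⟨-M, by rintro _ ⟨ω, rfl⟩; exact (abs_le.1 (hM ω)).1⟩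

end Bdd

def buyingPrices (A : Set (Ω → ℝ)) (f : Ω → ℝ) : Set ℝ := {μ | (f - fun _ => μ) ∈ A}

@[simp]
theorem mem_buyingPrices {A : Set (Ω → ℝ)} {f : Ω → ℝ} {μ : ℝ} :
    μ ∈ buyingPrices A f ↔ (f - fun _ => μ) ∈ A := Iff.rfl

theorem lpr_eq_sSup_buyingPrices (A : Set (Ω → ℝ)) (f : Ω → ℝ) :
    lpr A f = sSup (buyingPrices A f) := rfl

open scoped Pointwise

namespace Coherent

variable {D : Set (Ω → ℝ)} {f g : Ω → ℝ}

theorem bdd (hD : Coherent D) (hf : f ∈ D) : Bdd f := hD.1 f hf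

theorem zero_notMem (hD : Coherent D) : (0 : Ω → ℝ) ∉ D := hD.2.1

theorem mem_of_pos (hD : Coherent D) (hf : Bdd f) (hpos : 0 < f) : f ∈ D :=
  hD.2.2.1 f hf hpos.le hpos.ne'

theorem smul_mem (hD : Coherent D) (hf : f ∈ D) {c : ℝ} (hc : 0 < c) : c • f ∈ D :=
  hD.2.2.2.1 f hf c hc

theorem add_mem (hD : Coherent D) (hf : f ∈ D) (hg : g ∈ D) : f + g ∈ D :=
  hD.2.2.2.2 f hf g hg

theorem smul_mem_iff (hD : Coherent D) {c : ℝ} (hc : 0 < c) : c • f ∈ D ↔ f ∈ D := by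
  refine ⟨fun h => ?_, fun h => hD.smul_mem h hc⟩
  simpa [smul_smul, inv_mul_cancel₀ hc.ne'] using hD.smul_mem h (inv_pos.2 hc)

theorem subset_weakly (hD : Coherent D) : D ⊆ weakly D :=
  fun _ hf => ⟨hD.bdd hf, fun _ hg => hD.add_mem hf hg⟩

theorem buyingPrices_add_subset (hD : Coherent D) :
    buyingPrices D f + buyingPrices D g ⊆ buyingPrices D (f + g) := by
  refine Set.add_subset_iff.2 fun μ hμ ν hν => ?_
  show ((f + g) - fun _ => μ + ν) ∈ D
  convert hD.add_mem hμ hν using 1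
  funext ω
  simp only [Pi.sub_apply, Pi.add_apply]
  ring

theorem buyingPrices_smul (hD : Coherent D) (f : Ω → ℝ) {c : ℝ} (hc : 0 < c) :
    buyingPrices D (c • f) = c • buyingPrices D f := by
  ext μ
  have hscale : c • (f - fun _ => c⁻¹ • μ) = c • f - fun _ => μ := by
    funext ω
    simp only [Pi.smul_apply, Pi.sub_apply, smul_eq_mul]
    field_simp
  rw [Set.mem_smul_set_iff_inv_smul_mem₀ hc.ne', mem_buyingPrices, mem_buyingPrices,
    ← hD.smul_mem_iff hc (f := f - _), hscale]

variable [Nonempty Ω]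

theorem mem_of_forall_pos (hD : Coherent D) (hf : Bdd f) (hpos : ∀ ω, 0 < f ω) : f ∈ D :=
  hD.mem_of_pos hf (Pi.lt_def.2 ⟨fun ω => (hpos ω).le, Classical.arbitrary Ω, hpos _⟩)

theorem exists_nonneg_of_mem (hD : Coherent D) (hg : g ∈ D) : ∃ ω, 0 ≤ g ω := by
  by_contra! hneg
  have hneg_mem : -g ∈ D := hD.mem_of_forall_pos (hD.bdd hg).neg fun ω => neg_pos.2 (hneg ω)
  exact hD.zero_notMem (add_neg_cancel g ▸ hD.add_mem hg hneg_mem)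

theorem mem_buyingPrices_of_lt_sInf (hD : Coherent D) (hf : Bdd f) {μ : ℝ}
    (hμ : μ < sInf (Set.range f)) : μ ∈ buyingPrices D f :=
  hD.mem_of_forall_pos (hf.sub (bdd_const μ)) fun ω =>
    sub_pos.2 (hμ.trans_le (csInf_le hf.bddBelow_range ⟨ω, rfl⟩))

theorem le_sSup_range_of_mem_buyingPrices (hD : Coherent D) (hf : Bdd f) {μ : ℝ}
    (hμ : μ ∈ buyingPrices D f) : μ ≤ sSup (Set.range f) := by
  obtain ⟨ω, hω⟩ := hD.exists_nonneg_of_mem hμ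
  exact (sub_nonneg.1 hω).trans (le_csSup hf.bddAbove_range ⟨ω, rfl⟩)

theorem buyingPrices_nonempty (hD : Coherent D) (hf : Bdd f) : (buyingPrices D f).Nonempty :=
  ⟨_, hD.mem_buyingPrices_of_lt_sInf hf (sub_one_lt _)⟩

theorem bddAbove_buyingPrices (hD : Coherent D) (hf : Bdd f) : BddAbove (buyingPrices D f) :=
  ⟨_, fun _ => hD.le_sSup_range_of_mem_buyingPrices hf⟩

theorem sInf_range_le_lpr (hD : Coherent D) (hf : Bdd f) : sInf (Set.range f) ≤ lpr D f :=
  le_of_forall_lt_imp_le_of_dense fun _ hμ =>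
    le_csSup (hD.bddAbove_buyingPrices hf) (hD.mem_buyingPrices_of_lt_sInf hf hμ)

theorem lpr_le_sSup_range (hD : Coherent D) (hf : Bdd f) : lpr D f ≤ sSup (Set.range f) :=
  csSup_le (hD.buyingPrices_nonempty hf) fun _ => hD.le_sSup_range_of_mem_buyingPrices hf

theorem lpr_const (hD : Coherent D) (c : ℝ) : lpr D (fun _ => c) = c := by
  have hlo := hD.sInf_range_le_lpr (bdd_const c)
  have hhi := hD.lpr_le_sSup_range (bdd_const c)
  rw [Set.range_const, csInf_singleton] at hlo
  rw [Set.range_const, csSup_singleton] at hhi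
  exact le_antisymm hhi hlo

theorem le_lpr_of_mem_buyingPrices_weakly (hD : Coherent D) (hf : Bdd f) {μ : ℝ}
    (hμ : μ ∈ buyingPrices (weakly D) f) : μ ≤ lpr D f := by
  refine le_of_forall_lt_imp_le_of_dense fun ν hν => le_csSup (hD.bddAbove_buyingPrices hf) ?_
  have hsum := hμ.2 _ (hD.mem_of_forall_pos (bdd_const (μ - ν)) fun _ => sub_pos.2 hν)
  show (f - fun _ => ν) ∈ D
  convert hsum using 1
  funext ω
  simp only [Pi.sub_apply, Pi.add_apply]
  ring

theorem lpr_eq_lpr_weakly (hD : Coherent D) (hf : Bdd f) : lpr D f = lpr (weakly D) f := by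
  have hbdd : BddAbove (buyingPrices (weakly D) f) :=
    ⟨_, fun _ => hD.le_lpr_of_mem_buyingPrices_weakly hf⟩
  have hsub : buyingPrices D f ⊆ buyingPrices (weakly D) f := fun _ hμ => hD.subset_weakly hμ
  exact le_antisymm (csSup_le_csSup hbdd (hD.buyingPrices_nonempty hf) hsub)
    (csSup_le ((hD.buyingPrices_nonempty hf).mono hsub) fun _ =>
      hD.le_lpr_of_mem_buyingPrices_weakly hf)

theorem lpr_nonneg_of_mem_weakly (hD : Coherent D) (hf : f ∈ weakly D) : 0 ≤ lpr D f :=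
  hD.le_lpr_of_mem_buyingPrices_weakly hf.1 (show f - 0 ∈ weakly D by rwa [sub_zero])

theorem lpr_add_le (hD : Coherent D) (hf : Bdd f) (hg : Bdd g) :
    lpr D f + lpr D g ≤ lpr D (f + g) := by
  rw [lpr_eq_sSup_buyingPrices, lpr_eq_sSup_buyingPrices, ← csSup_add
    (hD.buyingPrices_nonempty hf) (hD.bddAbove_buyingPrices hf)
    (hD.buyingPrices_nonempty hg) (hD.bddAbove_buyingPrices hg)]
  exact csSup_le_csSup (hD.bddAbove_buyingPrices (hf.add hg))
    ((hD.buyingPrices_nonempty hf).add (hD.buyingPrices_nonempty hg))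
    hD.buyingPrices_add_subset

theorem lpr_smul (hD : Coherent D) (f : Ω → ℝ) {c : ℝ} (hc : 0 ≤ c) :
    lpr D (c • f) = c * lpr D f := by
  rcases hc.eq_or_lt with rfl | hc
  · rw [zero_smul, zero_mul]
    exact hD.lpr_const 0
  · rw [lpr_eq_sSup_buyingPrices, hD.buyingPrices_smul f hc, Real.sSup_smul_of_nonneg hc.le]
    rfl

end Coherent

def desirableSet (P : (Ω → ℝ) → ℝ) : Set (Ω → ℝ) := {f | Bdd f ∧ (0 < f ∨ 0 < P f)}

structure IsCoherentLowerPrevision (P : (Ω → ℝ) → ℝ) : Prop where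
  sInf_range_le : ∀ f : Ω → ℝ, Bdd f → sInf (Set.range f) ≤ P f
  add_le_add : ∀ f g : Ω → ℝ, Bdd f → Bdd g → P f + P g ≤ P (f + g)
  smul : ∀ f : Ω → ℝ, Bdd f → ∀ c : ℝ, 0 ≤ c → P (c • f) = c * P f

theorem Coherent.isCoherentLowerPrevision_lpr [Nonempty Ω] {D : Set (Ω → ℝ)}
    (hD : Coherent D) : IsCoherentLowerPrevision (lpr D) where
  sInf_range_le _ hf := hD.sInf_range_le_lpr hf
  add_le_add _ _ hf hg := hD.lpr_add_le hf hg
  smul f _ _ hc := hD.lpr_smul f hc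

namespace IsCoherentLowerPrevision

variable {P Q : (Ω → ℝ) → ℝ}

theorem congr (hQ : IsCoherentLowerPrevision Q) (h : ∀ f, Bdd f → P f = Q f) :
    IsCoherentLowerPrevision P where
  sInf_range_le f hf := h f hf ▸ hQ.sInf_range_le f hf
  add_le_add f g hf hg := by rw [h f hf, h g hg, h _ (hf.add hg)]; exact hQ.add_le_add f g hf hg
  smul f hf c hc := by rw [h f hf, h _ (hf.smul c)]; exact hQ.smul f hf c hc

theorem map_zero (hP : IsCoherentLowerPrevision P) : P 0 = 0 := by
  simpa using hP.smul 0 (bdd_const 0) 0 le_rfl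

theorem nonneg_of_nonneg (hP : IsCoherentLowerPrevision P) {f : Ω → ℝ} (hf : Bdd f)
    (h : 0 ≤ f) : 0 ≤ P f :=
  (Real.sInf_nonneg (by rintro _ ⟨ω, rfl⟩; exact h ω)).trans (hP.sInf_range_le f hf)

theorem nonneg_of_mem_desirableSet (hP : IsCoherentLowerPrevision P) {f : Ω → ℝ}
    (hf : f ∈ desirableSet P) : 0 ≤ P f :=
  hf.2.elim (fun hpos => hP.nonneg_of_nonneg hf.1 hpos.le) le_of_lt

theorem coherent_desirableSet (hP : IsCoherentLowerPrevision P) : Coherent (desirableSet P) := by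
  refine ⟨fun _ hf => hf.1, ?_, fun f hf h0 hne => ⟨hf, Or.inl (h0.lt_of_ne' hne)⟩, ?_, ?_⟩
  · rintro ⟨-, hpos | hpos⟩
    · exact lt_irrefl _ hpos
    · exact hpos.ne' hP.map_zero
  · rintro f ⟨hf, hpos | hpos⟩ c hc
    · exact ⟨hf.smul c, Or.inl (smul_pos hc hpos)⟩
    · exact ⟨hf.smul c, Or.inr (by rw [hP.smul f hf c hc.le]; positivity)⟩
  · intro f hf g hg
    refine ⟨hf.1.add hg.1, ?_⟩
    have hsum := hP.add_le_add f g hf.1 hg.1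
    have hPf := hP.nonneg_of_mem_desirableSet hf
    have hPg := hP.nonneg_of_mem_desirableSet hg
    rcases hf.2 with hf0 | hfP
    · rcases hg.2 with hg0 | hgP
      · exact Or.inl (add_pos hf0 hg0)
      · exact Or.inr (by linarith)
    · exact Or.inr (by linarith)

variable [Nonempty Ω]

theorem map_const (hP : IsCoherentLowerPrevision P) (c : ℝ) : P (fun _ => c) = c := by
  have hlo : ∀ a : ℝ, a ≤ P (fun _ => a) := fun a => by
    simpa [Set.range_const] using hP.sInf_range_le _ (bdd_const a)
  have hsum := hP.add_le_add _ _ (bdd_const c) (bdd_const (-c))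
  have hzero : ((fun _ => c) + fun _ => -c : Ω → ℝ) = 0 := by
    funext ω
    simp
  rw [hzero, hP.map_zero] at hsum
  linarith [hlo (-c), hlo c]

theorem map_sub_const (hP : IsCoherentLowerPrevision P) {f : Ω → ℝ} (hf : Bdd f) (μ : ℝ) :
    P (f - fun _ => μ) = P f - μ := by
  have hle := hP.add_le_add _ _ (hf.sub (bdd_const μ)) (bdd_const μ)
  have hge := hP.add_le_add _ _ hf (bdd_const (-μ))
  rw [sub_add_cancel, hP.map_const] at hle
  have hneg : (f + fun _ => -μ) = f - fun _ => μ := by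
    funext ω
    simp [sub_eq_add_neg]
  rw [hP.map_const, hneg] at hge
  linarith

theorem lpr_desirableSet (hP : IsCoherentLowerPrevision P) {f : Ω → ℝ} (hf : Bdd f) :
    lpr (desirableSet P) f = P f := by
  have hmem : ∀ μ < P f, μ ∈ buyingPrices (desirableSet P) f := fun μ hμ =>
    ⟨hf.sub (bdd_const μ), Or.inr (by rw [hP.map_sub_const hf]; linarith)⟩
  refine csSup_eq_of_forall_le_of_forall_lt_exists_gt ⟨_, hmem _ (sub_one_lt _)⟩
    (fun μ hμ => ?_) (fun w hw => ?_)
  · have := hP.nonneg_of_mem_desirableSet hμ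
    rw [hP.map_sub_const hf] at this
    linarith
  · obtain ⟨μ, hwμ, hμ⟩ := exists_between hw
    exact ⟨μ, hmem μ hμ, hwμ⟩

end IsCoherentLowerPrevision

theorem isCoherentLowerPrevision_iff_exists_coherent [Nonempty Ω] {P : (Ω → ℝ) → ℝ} :
    IsCoherentLowerPrevision P ↔ ∃ D, Coherent D ∧ ∀ f : Ω → ℝ, Bdd f → P f = lpr D f :=
  ⟨fun hP => ⟨desirableSet P, hP.coherent_desirableSet,
      fun _ hf => (hP.lpr_desirableSet hf).symm⟩,
    fun ⟨_, hD, hPD⟩ => hD.isCoherentLowerPrevision_lpr.congr hPD⟩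

theorem lpr_of_coherent_set [Nonempty Ω] :
    (∀ D : Set (Ω → ℝ), Coherent D →
      (∀ f : Ω → ℝ, Bdd f →
        {μ : ℝ | (f - fun _ => μ) ∈ D}.Nonempty ∧
        BddAbove {μ : ℝ | (f - fun _ => μ) ∈ D} ∧
        sInf (Set.range f) ≤ lpr D f ∧ lpr D f ≤ sSup (Set.range f)) ∧
      (∀ f : Ω → ℝ, Bdd f → lpr D f = lpr (weakly D) f) ∧
      ∀ f ∈ weakly D, 0 ≤ lpr D f) ∧
    ∀ P : (Ω → ℝ) → ℝ,
      ((∃ D : Set (Ω → ℝ), Coherent D ∧ ∀ f : Ω → ℝ, Bdd f → P f = lpr D f) ↔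
        ((∀ f : Ω → ℝ, Bdd f → sInf (Set.range f) ≤ P f) ∧
         (∀ f g : Ω → ℝ, Bdd f → Bdd g → P f + P g ≤ P (f + g)) ∧
         ∀ f : Ω → ℝ, Bdd f → ∀ c : ℝ, 0 ≤ c → P (c • f) = c * P f)) := by
  refine ⟨fun D hD => ⟨fun f hf => ⟨hD.buyingPrices_nonempty hf, hD.bddAbove_buyingPrices hf,
      hD.sInf_range_le_lpr hf, hD.lpr_le_sSup_range hf⟩,
      fun _ hf => hD.lpr_eq_lpr_weakly hf, fun _ hf => hD.lpr_nonneg_of_mem_weakly hf⟩,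
    fun P => isCoherentLowerPrevision_iff_exists_coherent.symm.trans ?_⟩
  exact ⟨fun ⟨h1, h2, h3⟩ => ⟨h1, h2, h3⟩, fun ⟨h1, h2, h3⟩ => ⟨h1, h2, h3⟩⟩
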